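/- Let S ⊆ {-1,0,1}^n, let ε ≤ dist(S, convex), and let ℓ = √(2n·ln(8/ε)). Then the number of points of Mid(ℓ) not in S but lying in the convex hull of S ∩ Mid(ℓ) is at least (ε/2)·3^n. -/

import Mathlib

/-- The ternary hypercube `{-1,0,1}^n` as a subset of `ℝ^n`. -/
def ternarySet (n : ℕ) : Set (Fin n → ℝ) :=
  {x | ∀ i, x i = -1 ∨ x i = 0 ∨ x i = 1}

/-- The middle layers `Mid(ℓ) = {x ∈ {-1,0,1}^n : |‖x‖₁ − 2n/3| ≤ ℓ}`. -/
def midLayers (n : ℕ) (ℓ : ℝ) : Set (Fin n → ℝ) :=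
  {x ∈ ternarySet n | |(∑ i, abs (x i)) - 2 * n / 3| ≤ ℓ}

/-! The set `T = conv(S ∩ Mid(ℓ)) ∩ {-1,0,1}^n` is convex, and its symmetric difference with `S`
consists of points of `Mid(ℓ) \ S` in `conv(S ∩ Mid(ℓ))` together with points outside `Mid(ℓ)`.
As `S` is `ε`-far from convex, it suffices that at most `(ε/2)·3^n` points lie outside `Mid(ℓ)`.
The number of nonzero coordinates has moment generating function
`(e^{-2s/3} + 2e^{s/3})^n ≤ 3^n e^{2ns²/9}` (centred, for `|s| ≤ 1`) over the cube, so a Chernoff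
bound with `s = ±ℓ/n` leaves at most `2 e^{-ℓ²/2n} 3^n = (ε/4)·3^n` points outside `Mid(ℓ)`. -/

open Finset Real

lemma Finset.card_filter_le_exp_mul_sum_exp {α : Type*} (A : Finset α) (f : α → ℝ) (r : ℝ) :
    (#{x ∈ A | r ≤ f x} : ℝ) ≤ exp (-r) * ∑ x ∈ A, exp (f x) := by
  rw [mul_sum, card_eq_sum_ones, Nat.cast_sum, sum_filter]
  refine sum_le_sum fun x _ => ?_
  split_ifs with h
  · rw [← exp_add]
    exact_mod_cast one_le_exp (by linarith)
  · positivity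

lemma exp_neg_two_thirds_add_two_mul_exp_third_le {s : ℝ} (hs : |s| ≤ 1) :
    exp (-(2 * s / 3)) + 2 * exp (s / 3) ≤ 3 * exp (2 * s ^ 2 / 9) := by
  have h₁ := abs_le.1 (abs_exp_sub_one_sub_id_le (x := -(2 * s / 3))
    (by rw [abs_neg, abs_div, abs_mul]; norm_num; linarith))
  have h₂ := abs_le.1 (abs_exp_sub_one_sub_id_le (x := s / 3)
    (by rw [abs_div]; norm_num; linarith))
  have h₃ := add_one_le_exp (2 * s ^ 2 / 9)
  nlinarith [h₁.2, h₂.2]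

noncomputable def ternaryFinset (n : ℕ) : Finset (Fin n → ℝ) :=
  Fintype.piFinset fun _ => {-1, 0, 1}

lemma coe_ternaryFinset (n : ℕ) : (ternaryFinset n : Set (Fin n → ℝ)) = ternarySet n := by
  ext x
  simp [ternaryFinset, ternarySet]

lemma card_ternaryFinset (n : ℕ) : #(ternaryFinset n) = 3 ^ n := by
  rw [ternaryFinset, Fintype.card_piFinset_const, card_insert_of_notMem (by norm_num),
    card_insert_of_notMem (by norm_num), card_singleton]

lemma ternarySet_finite (n : ℕ) : (ternarySet n).Finite :=
  coe_ternaryFinset n ▸ (ternaryFinset n).finite_toSet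

lemma ncard_ternarySet (n : ℕ) : (ternarySet n).ncard = 3 ^ n := by
  rw [← coe_ternaryFinset, Set.ncard_coe_finset, card_ternaryFinset]

lemma sum_abs_sub_two_thirds {n : ℕ} (x : Fin n → ℝ) :
    ∑ i, |x i| - 2 * n / 3 = ∑ i, (|x i| - 2 / 3) := by
  rw [sum_sub_distrib, sum_const, card_univ, Fintype.card_fin, nsmul_eq_mul]
  ring

lemma sum_ternaryFinset_exp (n : ℕ) (s : ℝ) :
    ∑ x ∈ ternaryFinset n, exp (s * (∑ i, |x i| - 2 * n / 3)) =
      (exp (-(2 * s / 3)) + 2 * exp (s / 3)) ^ n := by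
  simp_rw [sum_abs_sub_two_thirds, mul_sum, exp_sum]
  rw [ternaryFinset, ← prod_univ_sum (fun _ => {-1, 0, 1}) fun _ a => exp (s * (|a| - 2 / 3))]
  rw [sum_insert (by norm_num), sum_insert (by norm_num), sum_singleton, prod_const, card_univ,
    Fintype.card_fin, abs_neg, abs_one, abs_zero]
  ring_nf

lemma sum_ternaryFinset_exp_le (n : ℕ) {s : ℝ} (hs : |s| ≤ 1) :
    ∑ x ∈ ternaryFinset n, exp (s * (∑ i, |x i| - 2 * n / 3)) ≤
      exp (2 * n * s ^ 2 / 9) * 3 ^ n := by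
  calc ∑ x ∈ ternaryFinset n, exp (s * (∑ i, |x i| - 2 * n / 3))
      = (exp (-(2 * s / 3)) + 2 * exp (s / 3)) ^ n := sum_ternaryFinset_exp n s
    _ ≤ (3 * exp (2 * s ^ 2 / 9)) ^ n := by
        gcongr
        exact exp_neg_two_thirds_add_two_mul_exp_third_le hs
    _ = exp (2 * n * s ^ 2 / 9) * 3 ^ n := by
        rw [mul_pow, ← exp_nat_mul]
        ring_nf

lemma card_filter_ternaryFinset_le {n : ℕ} (hn : 0 < n) {ℓ : ℝ} (hℓ : 0 ≤ ℓ) (hℓn : ℓ ≤ n)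
    {σ : ℝ} (hσ : |σ| = 1) :
    (#{x ∈ ternaryFinset n | ℓ < σ * (∑ i, |x i| - 2 * n / 3)} : ℝ) ≤
      exp (-ℓ ^ 2 / (2 * n)) * 3 ^ n := by
  have hn' : (0 : ℝ) < n := by exact_mod_cast hn
  set s := σ * ℓ / n
  have hs : |s| ≤ 1 := by
    rw [abs_div, abs_mul, hσ, one_mul, abs_of_nonneg hℓ, Nat.abs_cast, div_le_one hn']
    exact hℓn
  calc (#{x ∈ ternaryFinset n | ℓ < σ * (∑ i, |x i| - 2 * n / 3)} : ℝ)
      ≤ #{x ∈ ternaryFinset n | ℓ ^ 2 / n ≤ s * (∑ i, |x i| - 2 * n / 3)} := by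
        gcongr with x
        intro h
        calc ℓ ^ 2 / n = ℓ / n * ℓ := by ring
          _ ≤ ℓ / n * (σ * (∑ i, |x i| - 2 * n / 3)) := by gcongr
          _ = s * (∑ i, |x i| - 2 * n / 3) := by ring
    _ ≤ exp (-(ℓ ^ 2 / n)) * (exp (2 * n * s ^ 2 / 9) * 3 ^ n) := by
        grw [card_filter_le_exp_mul_sum_exp, sum_ternaryFinset_exp_le n hs]
    _ ≤ exp (-ℓ ^ 2 / (2 * n)) * 3 ^ n := by
        rw [← mul_assoc, ← exp_add]
        gcongr
        have hσ2 : σ ^ 2 = 1 := by rw [← sq_abs, hσ, one_pow]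
        have hexp : -(ℓ ^ 2 / n) + 2 * n * s ^ 2 / 9 = -(7 / 9) * (ℓ ^ 2 / n) := by
          simp only [s, div_pow, mul_pow, hσ2]
          field_simp
          ring
        rw [hexp, show -ℓ ^ 2 / (2 * n) = -(1 / 2) * (ℓ ^ 2 / n) by ring]
        have : 0 ≤ ℓ ^ 2 / n := by positivity
        linarith

lemma ternarySet_diff_midLayers_eq_empty {n : ℕ} {ℓ : ℝ} (hℓ : 2 * n / 3 ≤ ℓ) :
    ternarySet n \ midLayers n ℓ = ∅ := by
  refine Set.sdiff_eq_empty.2 fun x hx => ⟨hx, ?_⟩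
  have habs : ∀ i, |x i| ≤ 1 := fun i => by rcases hx i with h | h | h <;> simp [h]
  have hsum : ∑ i, |x i| ≤ n := by simpa using sum_le_sum fun i (_ : i ∈ univ) => habs i
  have hnonneg : 0 ≤ ∑ i, |x i| := sum_nonneg fun i _ => abs_nonneg (x i)
  rw [abs_le]
  constructor <;> linarith

lemma ncard_ternarySet_diff_midLayers_le (n : ℕ) {ℓ : ℝ} (hℓ : 0 ≤ ℓ) :
    ((ternarySet n \ midLayers n ℓ).ncard : ℝ) ≤ 2 * exp (-ℓ ^ 2 / (2 * n)) * 3 ^ n := by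
  by_cases hℓn : 2 * n / 3 ≤ ℓ
  · rw [ternarySet_diff_midLayers_eq_empty hℓn, Set.ncard_empty, Nat.cast_zero]
    positivity
  have hn : 0 < n := Nat.pos_of_ne_zero fun h => hℓn (by simpa [h] using hℓ)
  have hset : ternarySet n \ midLayers n ℓ =
      ↑({x ∈ ternaryFinset n | ℓ < 1 * (∑ i, |x i| - 2 * n / 3)} ∪
        {x ∈ ternaryFinset n | ℓ < -1 * (∑ i, |x i| - 2 * n / 3)}) := by
    ext x
    simp only [← coe_ternaryFinset, midLayers, SetLike.mem_coe, Set.mem_sdiff, Set.mem_ofPred_eq,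
      not_and, not_le, lt_abs, one_mul, neg_mul, coe_union, coe_filter, Set.mem_union]
    tauto
  rw [hset, Set.ncard_coe_finset]
  have h₁ := card_filter_ternaryFinset_le hn hℓ (by linarith) (σ := 1) (by simp)
  have h₂ := card_filter_ternaryFinset_le hn hℓ (by linarith) (σ := -1) (by simp)
  grw [card_union_le]
  push_cast
  linarith

lemma ncard_ternarySet_diff_midLayers_sqrt_log_le (n : ℕ) {δ : ℝ} (hδ : 0 < δ) (hδ8 : δ ≤ 8) :
    ((ternarySet n \ midLayers n (√(2 * n * log (8 / δ)))).ncard : ℝ) ≤ δ / 4 * 3 ^ n := by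
  have hlog : 0 ≤ log (8 / δ) := log_nonneg (by rwa [le_div_iff₀ hδ, one_mul])
  -- for `n = 0` the exponent `-ℓ ^ 2 / (2 * n)` is `0` (division by zero), but the set is empty
  rcases n.eq_zero_or_pos with rfl | hn
  · rw [ternarySet_diff_midLayers_eq_empty (by simp), Set.ncard_empty, Nat.cast_zero]
    positivity
  have hexp : exp (-√(2 * n * log (8 / δ)) ^ 2 / (2 * n)) = δ / 8 := by
    rw [sq_sqrt (by positivity), neg_div, mul_div_cancel_left₀ _ (by positivity), exp_neg,
      exp_log (by positivity), inv_div]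
  grw [ncard_ternarySet_diff_midLayers_le n (sqrt_nonneg _), hexp]
  linarith

section Convex

variable {E : Type*} [AddCommGroup E] [Module ℝ E]

lemma convexHull_inter_convexHull_inter (A C : Set E) :
    convexHull ℝ (convexHull ℝ A ∩ C) ∩ C = convexHull ℝ A ∩ C := by
  refine Set.Subset.antisymm (Set.inter_subset_inter_left C ?_)
    (Set.subset_inter (subset_convexHull ℝ _) Set.inter_subset_right)
  exact (convex_convexHull ℝ A).convexHull_subset_iff.2 Set.inter_subset_left

lemma diff_union_diff_convexHull_inter_subset {S M C : Set E} (hS : S ⊆ C) :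
    (S \ (convexHull ℝ (S ∩ M) ∩ C)) ∪ ((convexHull ℝ (S ∩ M) ∩ C) \ S) ⊆
      (convexHull ℝ (S ∩ M) ∩ (M \ S)) ∪ (C \ M) := by
  rintro x (⟨hxS, hxT⟩ | ⟨⟨hxA, hxC⟩, hxS⟩) <;> by_cases hxM : x ∈ M
  · exact absurd ⟨subset_convexHull ℝ _ ⟨hxS, hxM⟩, hS hxS⟩ hxT
  · exact Or.inr ⟨hS hxS, hxM⟩
  · exact Or.inl ⟨hxA, hxM, hxS⟩
  · exact Or.inr ⟨hxC, hxM⟩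

end Convex

/-- If `ε ≤ dist(S, convex)` and `ℓ = √(2n·ln(8/ε))`, then at least `(ε/2)·3^n` points of
`Mid(ℓ)` lie outside `S` but inside the convex hull of `S ∩ Mid(ℓ)`. -/
theorem stmt_15 (n : ℕ) (S : Set (Fin n → ℝ)) (hS : S ⊆ ternarySet n)
    (ε : ℝ) (hε : 0 < ε)
    (hfar : ∀ T : Set (Fin n → ℝ), T ⊆ ternarySet n →
      T = convexHull ℝ T ∩ ternarySet n →
      ε ≤ (((S \ T) ∪ (T \ S)).ncard : ℝ) / 3 ^ n) :
    (ε / 2) * 3 ^ n ≤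
      ((convexHull ℝ (S ∩ midLayers n (Real.sqrt (2 * n * Real.log (8 / ε)))) ∩
          (midLayers n (Real.sqrt (2 * n * Real.log (8 / ε))) \ S)).ncard : ℝ) := by
  set M := midLayers n (√(2 * n * log (8 / ε)))
  have h3 : (0 : ℝ) < 3 ^ n := by positivity
  -- test against the convex set `∅`; this makes `log (8 / ε)` nonnegative
  have hε1 : ε ≤ 1 := by
    have h := hfar ∅ (Set.empty_subset _) (by simp)
    simp only [Set.sdiff_empty, Set.empty_sdiff, Set.union_empty] at h
    have hS3 : (S.ncard : ℝ) ≤ 3 ^ n := by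
      exact_mod_cast ncard_ternarySet n ▸ Set.ncard_le_ncard hS (ternarySet_finite n)
    linarith [(div_le_one h3).2 hS3]
  set T := convexHull ℝ (S ∩ M) ∩ ternarySet n
  have hfarT := hfar T Set.inter_subset_right (convexHull_inter_convexHull_inter _ _).symm
  have hΔ : (((S \ T) ∪ (T \ S)).ncard : ℝ) ≤
      (convexHull ℝ (S ∩ M) ∩ (M \ S)).ncard + (ternarySet n \ M).ncard := by
    have hfin : ((convexHull ℝ (S ∩ M) ∩ (M \ S)) ∪ (ternarySet n \ M)).Finite :=
      (ternarySet_finite n).subset (Set.union_subset (fun x hx => hx.2.1.1) Set.sdiff_subset)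
    exact_mod_cast (Set.ncard_le_ncard (diff_union_diff_convexHull_inter_subset hS) hfin).trans
      (Set.ncard_union_le _ _)
  have hM := ncard_ternarySet_diff_midLayers_sqrt_log_le n hε (by linarith)
  rw [le_div_iff₀ h3] at hfarT
  linarith
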